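/- arXiv:1710.03410 — 3 statements merged into one kernel-verified Lean document; each statement's English description precedes it below -/
import Mathlib

section
/- Let σ, τ > 0 and μ ∈ ℝ. Define r(β) = ∫_ℝ -Δ·Φ((Δ-β)/σ)·φ((Δ-μ)/τ) dΔ. Then for every β ∈ ℝ, r is differentiable at β with derivative r'(β) = ∫_ℝ (Δ/σ)·φ((Δ-β)/σ)·φ((Δ-μ)/τ) dΔ = τ(μσ² + βτ²)/(√(2π)·(σ²+τ²)^{3/2}) · exp(-(β-μ)²/(2(σ²+τ²))). (Differentiation under the integral sign of the Bayes risk in the Gaussian–Gaussian model.) -/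
open MeasureTheory Real

/-- The standard normal density. -/
noncomputable def stdNormalPDF (t : ℝ) : ℝ := Real.exp (-t ^ 2 / 2) / Real.sqrt (2 * Real.pi)

/-- The standard normal CDF. -/
noncomputable def stdNormalCDF (t : ℝ) : ℝ := ∫ u in Set.Iic t, stdNormalPDF u

lemma pdf_nonneg (t : ℝ) : 0 ≤ stdNormalPDF t :=
  div_nonneg (exp_pos _).le (Real.sqrt_nonneg _)

lemma pdf_le (t : ℝ) : stdNormalPDF t ≤ 1 / Real.sqrt (2 * Real.pi) := by
  have h : Real.exp (-t ^ 2 / 2) ≤ 1 := by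
    rw [Real.exp_le_one_iff]
    nlinarith [sq_nonneg t]
  exact div_le_div_of_nonneg_right h (by positivity)

lemma pdf_cont : Continuous stdNormalPDF := by
  unfold stdNormalPDF
  fun_prop

lemma pdf_eq (t : ℝ) : stdNormalPDF t = Real.exp (-(1/2) * t ^ 2) / Real.sqrt (2 * Real.pi) := by
  unfold stdNormalPDF; ring_nf

lemma pdf_integrable : Integrable stdNormalPDF := by
  have : Integrable (fun t : ℝ => Real.exp (-(1/2) * t ^ 2)) := integrable_exp_neg_mul_sq (by norm_num)
  have h2 := this.mul_const (Real.sqrt (2 * Real.pi))⁻¹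
  apply h2.congr
  filter_upwards with x
  rw [pdf_eq]; ring

lemma pdf_integral : ∫ t : ℝ, stdNormalPDF t = 1 := by
  simp_rw [pdf_eq, div_eq_mul_inv]
  rw [integral_mul_const, integral_gaussian, show π / (1*2⁻¹) = 2 * π by ring,
    mul_inv_cancel₀ (by positivity : Real.sqrt (2*π) ≠ 0)]

lemma cdf_nonneg (t : ℝ) : 0 ≤ stdNormalCDF t :=
  integral_nonneg fun x => pdf_nonneg x

lemma cdf_le_one (t : ℝ) : stdNormalCDF t ≤ 1 := by
  rw [← pdf_integral]
  exact setIntegral_le_integral pdf_integrable (Filter.Eventually.of_forall fun x => pdf_nonneg x)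

lemma cdf_hasDerivAt (t : ℝ) : HasDerivAt stdNormalCDF (stdNormalPDF t) t := by
  have heq : ∀ s : ℝ, stdNormalCDF s = stdNormalCDF 0 + ∫ u in (0:ℝ)..s, stdNormalPDF u := by
    intro s
    have := intervalIntegral.integral_Iic_sub_Iic (pdf_integrable.integrableOn (s := Set.Iic 0))
      (pdf_integrable.integrableOn (s := Set.Iic s))
    rw [← this]
    unfold stdNormalCDF
    ring
  have : HasDerivAt (fun s => stdNormalCDF 0 + ∫ u in (0:ℝ)..s, stdNormalPDF u) (stdNormalPDF t) t := by
    apply HasDerivAt.const_add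
    exact intervalIntegral.integral_hasDerivAt_right
      (pdf_integrable.intervalIntegrable) (pdf_cont.stronglyMeasurableAtFilter _ _)
      pdf_cont.continuousAt
  exact this.congr_of_eventuallyEq (Filter.Eventually.of_forall fun s => (heq s))

lemma cdf_cont : Continuous stdNormalCDF :=
  continuous_iff_continuousAt.2 fun t => (cdf_hasDerivAt t).continuousAt


lemma odd_gauss (b : ℝ) (hb : 0 < b) : ∫ x : ℝ, x * Real.exp (-b * x ^ 2) = 0 := by
  have h := integral_neg_eq_self (fun x : ℝ => x * Real.exp (-b * x ^ 2)) (volume : Measure ℝ)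
  simp only [neg_sq, neg_mul] at h ⊢
  rw [integral_neg] at h
  linarith

lemma shifted_moment (a m : ℝ) (ha : 0 < a) :
    ∫ x : ℝ, x * Real.exp (-(a/2) * (x - m) ^ 2) = m * Real.sqrt (π / (a/2)) := by
  have h1 : (∫ x : ℝ, x * Real.exp (-(a/2) * (x - m) ^ 2))
      = ∫ x : ℝ, (x + m) * Real.exp (-(a/2) * x ^ 2) := by
    rw [← integral_add_right_eq_self (fun x : ℝ => x * Real.exp (-(a/2) * (x - m) ^ 2)) m]
    congr 1; funext x
    simp only [add_sub_cancel_right]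
  rw [h1]
  have h2 : ∀ x : ℝ, (x + m) * Real.exp (-(a/2) * x ^ 2)
      = x * Real.exp (-(a/2) * x ^ 2) + m * Real.exp (-(a/2) * x ^ 2) := fun x => by ring
  simp_rw [h2]
  rw [integral_add (integrable_mul_exp_neg_mul_sq (by positivity))
    ((integrable_exp_neg_mul_sq (by positivity)).const_mul m),
    odd_gauss _ (by positivity), MeasureTheory.integral_const_mul, integral_gaussian, zero_add]

lemma exponent_id (σ τ μ β Δ : ℝ) (hσ : 0 < σ) (hτ : 0 < τ) :
    -((Δ - β) / σ) ^ 2 / 2 + -((Δ - μ) / τ) ^ 2 / 2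
      = -(β - μ) ^ 2 / (2 * (σ ^ 2 + τ ^ 2))
        + -((σ ^ 2 + τ ^ 2) / (σ ^ 2 * τ ^ 2) / 2)
            * (Δ - (β * τ ^ 2 + μ * σ ^ 2) / (σ ^ 2 + τ ^ 2)) ^ 2 := by
  have hσ' : σ ≠ 0 := hσ.ne'
  have hτ' : τ ≠ 0 := hτ.ne'
  have hS : σ ^ 2 + τ ^ 2 ≠ 0 := by positivity
  field_simp
  ring

lemma gauss_moment (σ τ μ β : ℝ) (hσ : 0 < σ) (hτ : 0 < τ) :
    (∫ Δ : ℝ, (Δ / σ) * stdNormalPDF ((Δ - β) / σ) * stdNormalPDF ((Δ - μ) / τ))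
      = τ * (μ * σ ^ 2 + β * τ ^ 2) /
          (Real.sqrt (2 * Real.pi) * (σ ^ 2 + τ ^ 2) ^ ((3 : ℝ) / 2)) *
        Real.exp (-(β - μ) ^ 2 / (2 * (σ ^ 2 + τ ^ 2))) := by
  have hS : (0:ℝ) < σ ^ 2 + τ ^ 2 := by positivity
  set S : ℝ := σ ^ 2 + τ ^ 2 with hSdef
  set a : ℝ := S / (σ ^ 2 * τ ^ 2) with hadef
  set m : ℝ := (β * τ ^ 2 + μ * σ ^ 2) / S with hmdef
  have ha : 0 < a := by positivity
  have h2π : Real.sqrt (2 * π) * Real.sqrt (2 * π) = 2 * π := Real.mul_self_sqrt (by positivity)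
  set C : ℝ := Real.exp (-(β - μ) ^ 2 / (2 * S)) / (2 * π * σ) with hCdef
  have key : ∀ Δ : ℝ, (Δ / σ) * stdNormalPDF ((Δ - β) / σ) * stdNormalPDF ((Δ - μ) / τ)
      = C * (Δ * Real.exp (-(a/2) * (Δ - m) ^ 2)) := by
    intro Δ
    unfold stdNormalPDF
    have hexp : Real.exp (-((Δ - β) / σ) ^ 2 / 2) * Real.exp (-((Δ - μ) / τ) ^ 2 / 2)
        = Real.exp (-(β - μ) ^ 2 / (2 * S)) * Real.exp (-(a/2) * (Δ - m) ^ 2) := by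
      rw [← Real.exp_add, ← Real.exp_add]
      congr 1
      rw [hSdef, hadef, hmdef, hSdef]
      rw [exponent_id σ τ μ β Δ hσ hτ]
    have step : (Δ / σ) * (Real.exp (-((Δ - β) / σ) ^ 2 / 2) / Real.sqrt (2 * π))
          * (Real.exp (-((Δ - μ) / τ) ^ 2 / 2) / Real.sqrt (2 * π))
        = Δ * (Real.exp (-((Δ - β) / σ) ^ 2 / 2) * Real.exp (-((Δ - μ) / τ) ^ 2 / 2))
            / (σ * (Real.sqrt (2 * π) * Real.sqrt (2 * π))) := by ring
    rw [step, hexp, h2π, hCdef]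
    ring
  simp_rw [key]
  rw [MeasureTheory.integral_const_mul, shifted_moment a m ha]
  have hsqrt : Real.sqrt (π / (a/2)) = Real.sqrt (2*π) * (σ*τ) / Real.sqrt S := by
    rw [show π / (a/2) = (2*π) * (σ*τ)^2 / S by rw [hadef]; field_simp]
    rw [Real.sqrt_div (by positivity), Real.sqrt_mul (by positivity), Real.sqrt_sq (by positivity)]
  have hS32 : S ^ ((3:ℝ)/2) = S * Real.sqrt S := by
    rw [show (3:ℝ)/2 = 1 + 1/2 by norm_num, Real.rpow_add hS, Real.rpow_one, ← Real.sqrt_eq_rpow]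
  rw [hsqrt, hS32, hCdef, hmdef]
  set u : ℝ := Real.sqrt (2*π) with hu
  set v : ℝ := Real.sqrt S with hv
  have hu2 : 2*π = u^2 := by rw [hu, Real.sq_sqrt (by positivity : (0:ℝ) ≤ 2*π)]
  have hv2 : S = v^2 := by rw [hv, Real.sq_sqrt hS.le]
  have hu0 : u ≠ 0 := by rw [hu]; positivity
  have hv0 : v ≠ 0 := by rw [hv]; positivity
  rw [hu2, hv2]
  field_simp
  ring


lemma one_le_sqrt2pi : (1:ℝ) ≤ Real.sqrt (2 * Real.pi) := by
  rw [show (1:ℝ) = Real.sqrt 1 by simp]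
  exact Real.sqrt_le_sqrt (by nlinarith [Real.pi_gt_three])

lemma pdf_le_one (t : ℝ) : stdNormalPDF t ≤ 1 := by
  refine (pdf_le t).trans ?_
  rw [div_le_one (by positivity)]
  exact one_le_sqrt2pi

lemma masterBound_integrable (τ μ : ℝ) (hτ : 0 < τ) :
    Integrable (fun Δ : ℝ => (|Δ - μ| + |μ|) * Real.exp (-(1/(2*τ^2)) * (Δ - μ) ^ 2)) := by
  have hb : (0:ℝ) < 1/(2*τ^2) := by positivity
  have h1 : Integrable (fun x : ℝ => (|x| + |μ|) * Real.exp (-(1/(2*τ^2)) * x ^ 2)) := by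
    have ha : Integrable (fun x : ℝ => |x * Real.exp (-(1/(2*τ^2)) * x ^ 2)|) :=
      (integrable_mul_exp_neg_mul_sq hb).abs
    have hc : Integrable (fun x : ℝ => |μ| * Real.exp (-(1/(2*τ^2)) * x ^ 2)) :=
      (integrable_exp_neg_mul_sq hb).const_mul _
    apply (ha.add hc).congr
    filter_upwards with x
    simp only [Pi.add_apply]
    rw [abs_mul, abs_of_nonneg (Real.exp_pos _).le]; ring
  exact h1.comp_sub_right μ

lemma pdf_comp_le (τ μ Δ : ℝ) (hτ : 0 < τ) :
    stdNormalPDF ((Δ - μ) / τ) ≤ Real.exp (-(1/(2*τ^2)) * (Δ - μ) ^ 2) := by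
  unfold stdNormalPDF
  have harg : -((Δ - μ) / τ) ^ 2 / 2 = -(1/(2*τ^2)) * (Δ - μ) ^ 2 := by
    field_simp
  rw [harg]
  exact div_le_self (Real.exp_pos _).le one_le_sqrt2pi

lemma abs_key (τ μ : ℝ) (hτ : 0 < τ) (Δ : ℝ) :
    |Δ| * stdNormalPDF ((Δ - μ) / τ)
      ≤ (|Δ - μ| + |μ|) * Real.exp (-(1/(2*τ^2)) * (Δ - μ) ^ 2) := by
  have h1 : |Δ| ≤ |Δ - μ| + |μ| := by
    have := abs_add_le (Δ - μ) μ
    simpa using this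
  exact mul_le_mul h1 (pdf_comp_le τ μ Δ hτ) (pdf_nonneg _) (by positivity)

theorem deriv_main (σ τ μ : ℝ) (hσ : 0 < σ) (hτ : 0 < τ) (β : ℝ) :
    HasDerivAt (fun b => ∫ Δ : ℝ, -Δ * stdNormalCDF ((Δ - b) / σ) * stdNormalPDF ((Δ - μ) / τ))
      (∫ Δ : ℝ, (Δ / σ) * stdNormalPDF ((Δ - β) / σ) * stdNormalPDF ((Δ - μ) / τ)) β := by
  have hBint := masterBound_integrable τ μ hτ
  have hcont : ∀ b : ℝ, Continuous fun Δ : ℝ =>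
      -Δ * stdNormalCDF ((Δ - b) / σ) * stdNormalPDF ((Δ - μ) / τ) :=
    fun b => (continuous_id.neg.mul
      (cdf_cont.comp ((continuous_id.sub continuous_const).div_const σ))).mul
      (pdf_cont.comp ((continuous_id.sub continuous_const).div_const τ))
  have hcont' : ∀ b : ℝ, Continuous fun Δ : ℝ =>
      (Δ / σ) * stdNormalPDF ((Δ - b) / σ) * stdNormalPDF ((Δ - μ) / τ) :=
    fun b => ((continuous_id.div_const σ).mul
      (pdf_cont.comp ((continuous_id.sub continuous_const).div_const σ))).mul
      (pdf_cont.comp ((continuous_id.sub continuous_const).div_const τ))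
  have hF_meas : ∀ᶠ b in nhds β, AEStronglyMeasurable
      (fun Δ : ℝ => -Δ * stdNormalCDF ((Δ - b) / σ) * stdNormalPDF ((Δ - μ) / τ)) volume :=
    Filter.Eventually.of_forall fun b => (hcont b).aestronglyMeasurable
  have hF_int : Integrable
      (fun Δ : ℝ => -Δ * stdNormalCDF ((Δ - β) / σ) * stdNormalPDF ((Δ - μ) / τ)) := by
    apply hBint.mono' ((hcont β).aestronglyMeasurable)
    filter_upwards with Δ
    have h2 : |stdNormalCDF ((Δ - β) / σ)| ≤ 1 :=
      abs_le.2 ⟨by linarith [cdf_nonneg ((Δ - β) / σ)], cdf_le_one _⟩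
    rw [Real.norm_eq_abs, abs_mul, abs_mul, abs_neg, abs_of_nonneg (pdf_nonneg _)]
    calc |Δ| * |stdNormalCDF ((Δ - β) / σ)| * stdNormalPDF ((Δ - μ) / τ)
        ≤ |Δ| * 1 * stdNormalPDF ((Δ - μ) / τ) := by
          gcongr
          exact pdf_nonneg _
      _ = |Δ| * stdNormalPDF ((Δ - μ) / τ) := by ring
      _ ≤ _ := abs_key τ μ hτ Δ
  have h_bound : ∀ᵐ Δ : ℝ, ∀ b ∈ Metric.ball β 1,
      ‖(Δ / σ) * stdNormalPDF ((Δ - b) / σ) * stdNormalPDF ((Δ - μ) / τ)‖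
        ≤ (1/σ) * ((|Δ - μ| + |μ|) * Real.exp (-(1/(2*τ^2)) * (Δ - μ) ^ 2)) := by
    filter_upwards with Δ
    intro b _
    rw [Real.norm_eq_abs, abs_mul, abs_mul, abs_div, abs_of_pos hσ,
      abs_of_nonneg (pdf_nonneg _), abs_of_nonneg (pdf_nonneg _)]
    calc |Δ| / σ * stdNormalPDF ((Δ - b) / σ) * stdNormalPDF ((Δ - μ) / τ)
        ≤ |Δ| / σ * 1 * stdNormalPDF ((Δ - μ) / τ) := by
          gcongr
          · exact pdf_nonneg _
          · exact pdf_le_one _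
      _ = (1/σ) * (|Δ| * stdNormalPDF ((Δ - μ) / τ)) := by ring
      _ ≤ _ := mul_le_mul_of_nonneg_left (abs_key τ μ hτ Δ) (by positivity)
  have h_diff : ∀ᵐ Δ : ℝ, ∀ b ∈ Metric.ball β 1,
      HasDerivAt (fun x => -Δ * stdNormalCDF ((Δ - x) / σ) * stdNormalPDF ((Δ - μ) / τ))
        ((Δ / σ) * stdNormalPDF ((Δ - b) / σ) * stdNormalPDF ((Δ - μ) / τ)) b := by
    filter_upwards with Δ
    intro b _
    have h1 : HasDerivAt (fun x : ℝ => (Δ - x) / σ) (-1 / σ) b := by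
      simpa using ((hasDerivAt_id b).const_sub Δ).div_const σ
    have h2 := (cdf_hasDerivAt ((Δ - b) / σ)).comp b h1
    have h3 := (h2.const_mul (-Δ)).mul_const (stdNormalPDF ((Δ - μ) / τ))
    refine h3.congr_deriv ?_
    ring
  have := hasDerivAt_integral_of_dominated_loc_of_deriv_le (Metric.ball_mem_nhds β one_pos) hF_meas hF_int
    ((hcont' β).aestronglyMeasurable) h_bound (hBint.const_mul (1/σ)) h_diff
  exact this.2

/-- Differentiation under the integral sign of the Bayes risk in the Gaussian–Gaussian model:
`r'(β)` equals both the integral `∫ (Δ/σ)·φ((Δ-β)/σ)·φ((Δ-μ)/τ) dΔ` and its closed form. -/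
theorem bayesRisk_hasDerivAt_gaussian (σ τ μ : ℝ) (hσ : 0 < σ) (hτ : 0 < τ)
    (r : ℝ → ℝ)
    (hr : ∀ β, r β = ∫ Δ : ℝ, -Δ * stdNormalCDF ((Δ - β) / σ) * stdNormalPDF ((Δ - μ) / τ)) :
    ∀ β : ℝ,
      HasDerivAt r (∫ Δ : ℝ, (Δ / σ) * stdNormalPDF ((Δ - β) / σ) * stdNormalPDF ((Δ - μ) / τ)) β
      ∧ (∫ Δ : ℝ, (Δ / σ) * stdNormalPDF ((Δ - β) / σ) * stdNormalPDF ((Δ - μ) / τ))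
          = τ * (μ * σ ^ 2 + β * τ ^ 2) /
              (Real.sqrt (2 * Real.pi) * (σ ^ 2 + τ ^ 2) ^ ((3 : ℝ) / 2)) *
            Real.exp (-(β - μ) ^ 2 / (2 * (σ ^ 2 + τ ^ 2))) := by
  intro β
  constructor
  · have h := deriv_main σ τ μ hσ hτ β
    have hre : r = fun b => ∫ Δ : ℝ, -Δ * stdNormalCDF ((Δ - b) / σ) * stdNormalPDF ((Δ - μ) / τ) :=
      funext hr
    rw [hre]
    exact h
  · exact gauss_moment σ τ μ β hσ hτ
end

section
/- Let S, τ > 0 and μ, β ∈ ℝ. Then ∫_ℝ √S·Δ·φ(√S·(Δ/S - β))·φ((Δ-μ)/τ) dΔ = S²τ(μ + βτ²)/(√(2π)·(S+τ²)^{3/2}) · exp(-(Sβ-μ)²/(2(S+τ²))). (Closed-form Gaussian integral giving the derivative of the Bayes risk for thresholding the inverse-variance weighted sum Y ~ N(Δ/S, 1/S).) -/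
open MeasureTheory Real
lemma integral_id_mul_gauss {b : ℝ} (hb : 0 < b) :
    ∫ x : ℝ, x * Real.exp (-b * x ^ 2) = 0 := by
  have h := integral_neg_eq_self (fun x : ℝ => x * Real.exp (-b * x ^ 2)) volume
  simp only [neg_sq, neg_mul] at h
  rw [integral_neg] at h
  simp only [neg_mul] ; linarith

lemma integral_shift_gauss {a m : ℝ} (ha : 0 < a) :
    ∫ x : ℝ, x * Real.exp (-a * (x - m) ^ 2) = m * Real.sqrt (π / a) := by
  rw [← integral_add_right_eq_self (fun x : ℝ => x * Real.exp (-a * (x - m) ^ 2)) m]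
  simp only [add_sub_cancel_right]
  simp_rw [add_mul]
  rw [integral_add (integrable_mul_exp_neg_mul_sq ha)
      ((integrable_exp_neg_mul_sq ha).const_mul m), integral_id_mul_gauss ha,
      MeasureTheory.integral_const_mul, integral_gaussian]
  ring


/-- Closed-form Gaussian integral giving the derivative of the Bayes risk for thresholding the
inverse-variance weighted sum `Y ~ N(Δ/S, 1/S)`. -/
theorem gaussian_integral_weightedSum (S τ μ β : ℝ) (hS : 0 < S) (hτ : 0 < τ) :
    ∫ Δ : ℝ, Real.sqrt S * Δ * stdNormalPDF (Real.sqrt S * (Δ / S - β)) *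
        stdNormalPDF ((Δ - μ) / τ)
      = S ^ 2 * τ * (μ + β * τ ^ 2) /
          (Real.sqrt (2 * Real.pi) * (S + τ ^ 2) ^ ((3 : ℝ) / 2)) *
        Real.exp (-(S * β - μ) ^ 2 / (2 * (S + τ ^ 2))) := by
  simp only [stdNormalPDF]
  have hSτ : 0 < S + τ ^ 2 := by positivity
  set a : ℝ := (S + τ ^ 2) / (2 * S * τ ^ 2) with ha_def
  have ha : 0 < a := by positivity
  set m : ℝ := S * (μ + β * τ ^ 2) / (S + τ ^ 2) with hm_def
  set K : ℝ := -(S * β - μ) ^ 2 / (2 * (S + τ ^ 2)) with hK_def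
  set C : ℝ := Real.sqrt S / (2 * π) * Real.exp K with hC_def
  have hpt : ∀ Δ : ℝ,
      Real.sqrt S * Δ * (Real.exp (-(Real.sqrt S * (Δ / S - β)) ^ 2 / 2) / Real.sqrt (2 * Real.pi)) *
        (Real.exp (-((Δ - μ) / τ) ^ 2 / 2) / Real.sqrt (2 * Real.pi))
      = C * (Δ * Real.exp (-a * (Δ - m) ^ 2)) := by
    intro Δ
    have h2π : Real.sqrt (2 * π) * Real.sqrt (2 * π) = 2 * π :=
      Real.mul_self_sqrt (by positivity)
    have hsq : (Real.sqrt S * (Δ / S - β)) ^ 2 = S * (Δ / S - β) ^ 2 := by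
      rw [mul_pow, Real.sq_sqrt hS.le]
    rw [hsq, hC_def, mul_assoc, div_mul_div_comm, h2π]
    have hexp : Real.exp (-(S * (Δ / S - β) ^ 2) / 2) * Real.exp (-((Δ - μ) / τ) ^ 2 / 2)
        = Real.exp K * Real.exp (-a * (Δ - m) ^ 2) := by
      rw [← Real.exp_add, ← Real.exp_add]
      congr 1
      rw [hK_def, ha_def, hm_def]
      field_simp
      ring
    rw [hexp]
    ring
  simp_rw [hpt]
  rw [MeasureTheory.integral_const_mul, integral_shift_gauss ha]
  have hQ : Real.sqrt (π / a) =
      Real.sqrt (2 * π) * Real.sqrt S * τ / Real.sqrt (S + τ ^ 2) := by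
    rw [show π / a = (Real.sqrt (2 * π) * Real.sqrt S * τ / Real.sqrt (S + τ ^ 2)) ^ 2 by
        rw [div_pow, mul_pow, mul_pow, Real.sq_sqrt (by positivity : (0:ℝ) ≤ 2 * π),
          Real.sq_sqrt hS.le, Real.sq_sqrt hSτ.le, ha_def]
        field_simp]
    exact Real.sqrt_sq (by positivity)
  have h32 : (S + τ ^ 2) ^ ((3 : ℝ) / 2) = (S + τ ^ 2) * Real.sqrt (S + τ ^ 2) := by
    rw [show (3 : ℝ) / 2 = 1 + 1 / 2 by norm_num, Real.rpow_add hSτ, Real.rpow_one,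
      ← Real.sqrt_eq_rpow]
  have hs := Real.mul_self_sqrt hS.le
  have hp := Real.mul_self_sqrt (by positivity : (0:ℝ) ≤ 2 * π)
  have ht := Real.mul_self_sqrt hSτ.le
  have hsne : Real.sqrt S ≠ 0 := by positivity
  have hpne : Real.sqrt (2 * π) ≠ 0 := by positivity
  have htne : Real.sqrt (S + τ ^ 2) ≠ 0 := by positivity
  rw [hC_def, hm_def, hQ, h32]
  set p := Real.sqrt (2 * π) with hp_def
  set s := Real.sqrt S with hs_def
  set t := Real.sqrt (S + τ ^ 2) with ht_def
  rw [← ht, ← hp, ← hs]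
  field_simp
end

section
/- Let n ≥ 2, μ ∈ ℝ, τ > 0, σ_1, …, σ_n > 0 and x_1, …, x_{n-1} ∈ ℝ. Set s = 1/τ² + ∑_{j=1}^{n-1} 1/σ_j² and m = μ/τ² + ∑_{j=1}^{n-1} x_j/σ_j². Define r(β) = ∫_ℝ -Δ·Φ((Δ-β)/σ_n)·√s·φ(√s·(Δ - m/s)) dΔ. Then the unique global minimizer of r is β* = -σ_n²·m = -μσ_n²/τ² - σ_n²·∑_{j=1}^{n-1} x_j/σ_j². (The Bayes-optimal threshold for the nth experiment, when the prior on Δ has been updated to the Gaussian posterior N(s⁻¹m, s⁻¹) after n-1 earlier observations, equals the single-experiment optimal threshold plus a correction from the weighted sum of past observations.) -/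
open MeasureTheory Real

namespace BA


lemma s2p : 0 < Real.sqrt (2 * Real.pi) := Real.sqrt_pos.2 (by positivity)

lemma pdf_pos (t : ℝ) : 0 < stdNormalPDF t := div_pos (Real.exp_pos _) s2p

lemma pdf_le (t : ℝ) : stdNormalPDF t ≤ (Real.sqrt (2 * Real.pi))⁻¹ := by
  rw [stdNormalPDF, div_eq_mul_inv]
  nlinarith [Real.exp_le_one_iff.2 (by nlinarith [sq_nonneg t] : -t^2/2 ≤ 0), (inv_pos.2 s2p).le,
    Real.exp_pos (-t^2/2)]

lemma continuous_pdf : Continuous stdNormalPDF := by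
  unfold stdNormalPDF; fun_prop

lemma pdf_eq' : stdNormalPDF = fun t => Real.exp (-(1/2) * t ^ 2) / Real.sqrt (2 * Real.pi) := by
  funext t; rw [stdNormalPDF, show -t^2/2 = -(1/2)*t^2 by ring]

lemma integrable_pdf : Integrable stdNormalPDF := by
  rw [pdf_eq']
  exact (integrable_exp_neg_mul_sq (by norm_num : (0:ℝ) < 1/2)).div_const _

lemma integral_pdf : ∫ t, stdNormalPDF t = 1 := by
  rw [pdf_eq']
  rw [MeasureTheory.integral_div, integral_gaussian]
  rw [show Real.pi / (1/2) = 2 * Real.pi by ring]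
  exact div_self (ne_of_gt s2p)

lemma integrable_id_mul_pdf : Integrable (fun t => t * stdNormalPDF t) := by
  have h := (integrable_rpow_mul_exp_neg_mul_sq (by norm_num : (0:ℝ) < 1/2)
    (by norm_num : (-1:ℝ) < 1)).div_const (Real.sqrt (2 * Real.pi))
  rw [pdf_eq']
  simpa [Real.rpow_one, mul_div_assoc] using h

lemma pdf_neg (t : ℝ) : stdNormalPDF (-t) = stdNormalPDF t := by
  rw [stdNormalPDF, stdNormalPDF, neg_pow]; norm_num

lemma integral_id_mul_pdf : ∫ t, t * stdNormalPDF t = 0 := by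
  have h : ∫ t, (fun u => u * stdNormalPDF u) (-t) = ∫ t, t * stdNormalPDF t :=
    integral_neg_eq_self (fun u => u * stdNormalPDF u) volume
  simp only [pdf_neg, neg_mul] at h
  rw [integral_neg] at h
  linarith


lemma integrable_comp_affine {f : ℝ → ℝ} (hf : Integrable f) {a : ℝ} (ha : a ≠ 0) (b : ℝ) :
    Integrable (fun t => f (a * (t - b))) := by
  have h2 := (hf.comp_sub_right (a * b)).comp_mul_left' ha
  simpa [mul_sub] using h2

lemma integral_comp_affine (f : ℝ → ℝ) (a b : ℝ) :
    ∫ t, f (a * (t - b)) = |a⁻¹| * ∫ t, f t := by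
  have h1 : (∫ t, f (a * (t - b))) = ∫ t, (fun u => f (u - a * b)) (a * t) := by
    congr 1; funext t; simp [mul_sub]
  rw [h1, MeasureTheory.Measure.integral_comp_mul_left (fun u => f (u - a * b)) a,
    integral_sub_right_eq_self f (a * b), smul_eq_mul]

lemma integral_gauss {a : ℝ} (ha : 0 < a) (b : ℝ) :
    ∫ t, a * stdNormalPDF (a * (t - b)) = 1 := by
  rw [MeasureTheory.integral_const_mul, integral_comp_affine stdNormalPDF a b, integral_pdf,
    abs_of_pos (inv_pos.2 ha)]
  field_simp

lemma integrable_gauss {a : ℝ} (ha : 0 < a) (b : ℝ) :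
    Integrable (fun t => a * stdNormalPDF (a * (t - b))) :=
  (integrable_comp_affine integrable_pdf (ne_of_gt ha) b).const_mul a

lemma id_mul_gauss_eq {a : ℝ} (ha : a ≠ 0) (b : ℝ) :
    (fun t => t * (a * stdNormalPDF (a * (t - b))))
      = fun t => (fun u => u * stdNormalPDF u + a * b * stdNormalPDF u) (a * (t - b)) := by
  funext t
  have : a * (t - b) * stdNormalPDF (a * (t - b)) + a * b * stdNormalPDF (a * (t - b))
      = t * (a * stdNormalPDF (a * (t - b))) := by ring
  simpa using this.symm

lemma integrable_id_mul_gauss {a : ℝ} (ha : 0 < a) (b : ℝ) :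
    Integrable (fun t => t * (a * stdNormalPDF (a * (t - b)))) := by
  rw [id_mul_gauss_eq (ne_of_gt ha) b]
  exact integrable_comp_affine (integrable_id_mul_pdf.add (integrable_pdf.const_mul (a * b)))
    (ne_of_gt ha) b

lemma integral_id_mul_gauss {a : ℝ} (ha : 0 < a) (b : ℝ) :
    ∫ t, t * (a * stdNormalPDF (a * (t - b))) = b := by
  rw [id_mul_gauss_eq (ne_of_gt ha) b,
    integral_comp_affine (fun u => u * stdNormalPDF u + a * b * stdNormalPDF u) a b, MeasureTheory.integral_add
    integrable_id_mul_pdf (integrable_pdf.const_mul (a * b)), integral_id_mul_pdf,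
    MeasureTheory.integral_const_mul, integral_pdf, abs_of_pos (inv_pos.2 ha)]
  field_simp
  ring

lemma cdf_nonneg (t : ℝ) : 0 ≤ stdNormalCDF t :=
  integral_nonneg fun u => (pdf_pos u).le

lemma cdf_le_one (t : ℝ) : stdNormalCDF t ≤ 1 := by
  rw [stdNormalCDF, ← integral_pdf]
  exact setIntegral_le_integral integrable_pdf (Filter.Eventually.of_forall fun u => (pdf_pos u).le)

lemma hasDerivAt_cdf (t : ℝ) : HasDerivAt stdNormalCDF (stdNormalPDF t) t := by
  have heq : ∀ u : ℝ, stdNormalCDF u = stdNormalCDF 0 + ∫ x in (0:ℝ)..u, stdNormalPDF x := by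
    intro u
    have := intervalIntegral.integral_Iic_sub_Iic (integrable_pdf.integrableOn (s := Set.Iic 0))
      (integrable_pdf.integrableOn (s := Set.Iic u))
    simp only [stdNormalCDF]
    linarith
  have h : HasDerivAt (fun u : ℝ => stdNormalCDF 0 + ∫ x in (0:ℝ)..u, stdNormalPDF x)
      (stdNormalPDF t) t :=
    (intervalIntegral.integral_hasDerivAt_right
      (integrable_pdf.intervalIntegrable (a := 0) (b := t))
      (continuous_pdf.stronglyMeasurable.stronglyMeasurableAtFilter (l := nhds t) (μ := volume))
      continuous_pdf.continuousAt).const_add (stdNormalCDF 0)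
  exact h.congr_of_eventuallyEq (Filter.Eventually.of_forall heq)

lemma continuous_cdf : Continuous stdNormalCDF :=
  continuous_iff_continuousAt.2 fun t => (hasDerivAt_cdf t).continuousAt



lemma prod_identity {σ0 s c : ℝ} (hσ : 0 < σ0) (hs : 0 < s) (β Δ : ℝ) :
    1 / σ0 * stdNormalPDF ((Δ - β) / σ0) * (Real.sqrt s * stdNormalPDF (Real.sqrt s * (Δ - c)))
      = (Real.sqrt s * Real.exp (-(β ^ 2 / σ0 ^ 2 + s * c ^ 2 -
            (s + 1 / σ0 ^ 2) * ((β / σ0 ^ 2 + s * c) / (s + 1 / σ0 ^ 2)) ^ 2) / 2)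
          / (σ0 * Real.sqrt (s + 1 / σ0 ^ 2) * Real.sqrt (2 * Real.pi)))
        * (Real.sqrt (s + 1 / σ0 ^ 2) *
            stdNormalPDF (Real.sqrt (s + 1 / σ0 ^ 2) * (Δ - (β / σ0 ^ 2 + s * c) / (s + 1 / σ0 ^ 2)))) := by
  have hq : 0 < s + 1 / σ0 ^ 2 := by positivity
  have hs2 : Real.sqrt s ^ 2 = s := Real.sq_sqrt hs.le
  have hq2 : Real.sqrt (s + 1 / σ0 ^ 2) ^ 2 = s + 1 / σ0 ^ 2 := Real.sq_sqrt hq.le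
  have hexp : -((Δ - β) / σ0) ^ 2 / 2 + -(Real.sqrt s * (Δ - c)) ^ 2 / 2
      = -(Real.sqrt (s + 1 / σ0 ^ 2) * (Δ - (β / σ0 ^ 2 + s * c) / (s + 1 / σ0 ^ 2))) ^ 2 / 2
        + -(β ^ 2 / σ0 ^ 2 + s * c ^ 2 -
            (s + 1 / σ0 ^ 2) * ((β / σ0 ^ 2 + s * c) / (s + 1 / σ0 ^ 2)) ^ 2) / 2 := by
    rw [mul_pow, mul_pow, hs2, hq2]
    field_simp
    ring
  have e : Real.exp (-((Δ - β) / σ0) ^ 2 / 2) * Real.exp (-(Real.sqrt s * (Δ - c)) ^ 2 / 2)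
      = Real.exp (-(Real.sqrt (s + 1 / σ0 ^ 2) * (Δ - (β / σ0 ^ 2 + s * c) / (s + 1 / σ0 ^ 2))) ^ 2 / 2)
        * Real.exp (-(β ^ 2 / σ0 ^ 2 + s * c ^ 2 -
            (s + 1 / σ0 ^ 2) * ((β / σ0 ^ 2 + s * c) / (s + 1 / σ0 ^ 2)) ^ 2) / 2) := by
    rw [← Real.exp_add, ← Real.exp_add, hexp]
  have hqs : 0 < Real.sqrt (s + 1 / σ0 ^ 2) := Real.sqrt_pos.2 hq
  rw [stdNormalPDF, stdNormalPDF, stdNormalPDF]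
  set S := Real.sqrt (2 * Real.pi) with hS
  set Q1 := Real.sqrt s with hQ1
  set Q2 := Real.sqrt (s + 1 / σ0 ^ 2) with hQ2
  set E1 := Real.exp (-((Δ - β) / σ0) ^ 2 / 2) with hE1
  set E2 := Real.exp (-(Q1 * (Δ - c)) ^ 2 / 2) with hE2
  set E3 := Real.exp (-(Q2 * (Δ - (β / σ0 ^ 2 + s * c) / (s + 1 / σ0 ^ 2))) ^ 2 / 2) with hE3
  set E4 := Real.exp (-(β ^ 2 / σ0 ^ 2 + s * c ^ 2 -
      (s + 1 / σ0 ^ 2) * ((β / σ0 ^ 2 + s * c) / (s + 1 / σ0 ^ 2)) ^ 2) / 2) with hE4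
  have hSpos : 0 < S := s2p
  field_simp
  linear_combination Q1 * e


section main
variable {σ0 s c : ℝ}

/-- The integrand. -/
noncomputable def Fint (σ0 s c β Δ : ℝ) : ℝ :=
  -Δ * stdNormalCDF ((Δ - β) / σ0) * (Real.sqrt s * stdNormalPDF (Real.sqrt s * (Δ - c)))

noncomputable def Fint' (σ0 s c β Δ : ℝ) : ℝ :=
  Δ * (1 / σ0 * stdNormalPDF ((Δ - β) / σ0)) * (Real.sqrt s * stdNormalPDF (Real.sqrt s * (Δ - c)))

lemma gaussArg (hs : 0 < s) (Δ : ℝ) :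
    Real.sqrt s * stdNormalPDF (Real.sqrt s * (Δ - c)) > 0 :=
  mul_pos (Real.sqrt_pos.2 hs) (pdf_pos _)

lemma continuous_Fint (hσ : 0 < σ0) (β : ℝ) : Continuous (Fint σ0 s c β) := by
  unfold Fint
  exact (continuous_id.neg.mul (continuous_cdf.comp
    ((continuous_id.sub continuous_const).div_const σ0))).mul
    (continuous_const.mul (continuous_pdf.comp (continuous_const.mul
      (continuous_id.sub continuous_const))))

lemma continuous_Fint' (hσ : 0 < σ0) (β : ℝ) : Continuous (Fint' σ0 s c β) := by
  unfold Fint'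
  exact (continuous_id.mul (continuous_const.mul (continuous_pdf.comp
    ((continuous_id.sub continuous_const).div_const σ0)))).mul
    (continuous_const.mul (continuous_pdf.comp (continuous_const.mul
      (continuous_id.sub continuous_const))))

lemma hasDerivAt_Fint (hσ : 0 < σ0) (β Δ : ℝ) :
    HasDerivAt (fun b => Fint σ0 s c b Δ) (Fint' σ0 s c β Δ) β := by
  have inner : HasDerivAt (fun b : ℝ => (Δ - b) / σ0) (-1 / σ0) β :=
    ((hasDerivAt_id β).const_sub Δ).div_const σ0
  have h1 : HasDerivAt (fun b : ℝ => stdNormalCDF ((Δ - b) / σ0))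
      (stdNormalPDF ((Δ - β) / σ0) * (-1 / σ0)) β :=
    (hasDerivAt_cdf _).comp β inner
  have h2 := (h1.const_mul (-Δ)).mul_const (Real.sqrt s * stdNormalPDF (Real.sqrt s * (Δ - c)))
  refine h2.congr_deriv ?_
  unfold Fint'
  ring

lemma bound_integrable (hσ : 0 < σ0) (hs : 0 < s) :
    Integrable (fun Δ => (1 / σ0 * (Real.sqrt (2 * Real.pi))⁻¹) *
      |Δ * (Real.sqrt s * stdNormalPDF (Real.sqrt s * (Δ - c)))|) :=
  ((integrable_id_mul_gauss (Real.sqrt_pos.2 hs) c).abs).const_mul _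

lemma hasDerivAt_risk (hσ : 0 < σ0) (hs : 0 < s) (β₀ : ℝ) :
    HasDerivAt (fun b => ∫ Δ : ℝ, Fint σ0 s c b Δ) (∫ Δ : ℝ, Fint' σ0 s c β₀ Δ) β₀ := by
  have key := hasDerivAt_integral_of_dominated_loc_of_deriv_le (μ := volume)
    (F := fun b Δ => Fint σ0 s c b Δ) (F' := fun b Δ => Fint' σ0 s c b Δ)
    (bound := fun Δ => (1 / σ0 * (Real.sqrt (2 * Real.pi))⁻¹) *
      |Δ * (Real.sqrt s * stdNormalPDF (Real.sqrt s * (Δ - c)))|)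
    (x₀ := β₀) (s := Metric.ball β₀ 1) (Metric.ball_mem_nhds β₀ one_pos)
    (Filter.Eventually.of_forall fun b => (continuous_Fint hσ b).aestronglyMeasurable)
    ?_ ((continuous_Fint' hσ β₀).aestronglyMeasurable) ?_ (bound_integrable hσ hs)
    (Filter.Eventually.of_forall fun Δ b _ => hasDerivAt_Fint hσ b Δ)
  · exact key.2
  · -- Integrable (Fint σ0 s c β₀)
    refine (Integrable.mono' ((integrable_id_mul_gauss (Real.sqrt_pos.2 hs) c).abs)
      (continuous_Fint hσ β₀).aestronglyMeasurable ?_)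
    refine Filter.Eventually.of_forall fun Δ => ?_
    have hg := (gaussArg (c := c) hs Δ).le
    have h0 := cdf_nonneg ((Δ - β₀) / σ0)
    have h1 := cdf_le_one ((Δ - β₀) / σ0)
    rw [Real.norm_eq_abs]
    unfold Fint
    rw [abs_mul, abs_mul, abs_of_nonneg hg]
    calc |(-Δ)| * |stdNormalCDF ((Δ - β₀) / σ0)| * (Real.sqrt s * stdNormalPDF (Real.sqrt s * (Δ - c)))
        ≤ |(-Δ)| * 1 * (Real.sqrt s * stdNormalPDF (Real.sqrt s * (Δ - c))) := by
          gcongr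
          rw [abs_of_nonneg h0]; exact h1
      _ = |Δ * (Real.sqrt s * stdNormalPDF (Real.sqrt s * (Δ - c)))| := by
          rw [abs_mul, abs_neg, mul_one, abs_of_nonneg hg]
  · -- bound
    refine Filter.Eventually.of_forall fun Δ b _ => ?_
    rw [Real.norm_eq_abs]
    unfold Fint'
    have hg := (gaussArg (c := c) hs Δ).le
    rw [abs_mul, abs_mul, abs_of_nonneg hg, abs_mul]
    have hple : |stdNormalPDF ((Δ - b) / σ0)| ≤ (Real.sqrt (2 * Real.pi))⁻¹ := by
      rw [abs_of_nonneg (pdf_pos _).le]; exact pdf_le _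
    have h1σ : |1 / σ0| = 1 / σ0 := abs_of_pos (by positivity)
    rw [h1σ]
    calc |Δ| * (1 / σ0 * |stdNormalPDF ((Δ - b) / σ0)|) *
          (Real.sqrt s * stdNormalPDF (Real.sqrt s * (Δ - c)))
        ≤ |Δ| * (1 / σ0 * (Real.sqrt (2 * Real.pi))⁻¹) *
          (Real.sqrt s * stdNormalPDF (Real.sqrt s * (Δ - c))) := by
          gcongr
      _ = (1 / σ0 * (Real.sqrt (2 * Real.pi))⁻¹) *
          |Δ * (Real.sqrt s * stdNormalPDF (Real.sqrt s * (Δ - c)))| := by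
          rw [abs_mul, abs_of_nonneg hg]; ring

lemma integral_Fint' (hσ : 0 < σ0) (hs : 0 < s) (β : ℝ) :
    ∫ Δ : ℝ, Fint' σ0 s c β Δ
      = (Real.sqrt s * Real.exp (-(β ^ 2 / σ0 ^ 2 + s * c ^ 2 -
            (s + 1 / σ0 ^ 2) * ((β / σ0 ^ 2 + s * c) / (s + 1 / σ0 ^ 2)) ^ 2) / 2)
          / (σ0 * Real.sqrt (s + 1 / σ0 ^ 2) * Real.sqrt (2 * Real.pi)))
        * ((β / σ0 ^ 2 + s * c) / (s + 1 / σ0 ^ 2)) := by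
  have hq : 0 < s + 1 / σ0 ^ 2 := by positivity
  have h1 : ∀ Δ : ℝ, Fint' σ0 s c β Δ
      = (Real.sqrt s * Real.exp (-(β ^ 2 / σ0 ^ 2 + s * c ^ 2 -
            (s + 1 / σ0 ^ 2) * ((β / σ0 ^ 2 + s * c) / (s + 1 / σ0 ^ 2)) ^ 2) / 2)
          / (σ0 * Real.sqrt (s + 1 / σ0 ^ 2) * Real.sqrt (2 * Real.pi)))
        * (Δ * (Real.sqrt (s + 1 / σ0 ^ 2) *
            stdNormalPDF (Real.sqrt (s + 1 / σ0 ^ 2) * (Δ - (β / σ0 ^ 2 + s * c) / (s + 1 / σ0 ^ 2))))) := by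
    intro Δ
    unfold Fint'
    rw [show Δ * (1 / σ0 * stdNormalPDF ((Δ - β) / σ0)) *
        (Real.sqrt s * stdNormalPDF (Real.sqrt s * (Δ - c)))
      = Δ * (1 / σ0 * stdNormalPDF ((Δ - β) / σ0) *
        (Real.sqrt s * stdNormalPDF (Real.sqrt s * (Δ - c)))) by ring,
      prod_identity hσ hs β Δ]
    ring
  simp_rw [h1]
  rw [MeasureTheory.integral_const_mul, integral_id_mul_gauss (Real.sqrt_pos.2 hq)]

end main
end BA


open BA in
/-- The Bayes-optimal threshold for the `n`th experiment (here `n = k + 1 ≥ 2`), when the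
prior on `Δ` has been updated to the Gaussian posterior `N(s⁻¹m, s⁻¹)` after the first
`n - 1 = k` observations, is `β* = -σₙ²·m = -μσₙ²/τ² - σₙ²·∑_{j<n} xⱼ/σⱼ²`: it is the unique
global minimizer of the Bayes risk. -/
theorem bayesOptimal_threshold_sequential (k : ℕ) (hk : 1 ≤ k) (μ τ : ℝ) (hτ : 0 < τ)
    (σ : Fin (k + 1) → ℝ) (hσ : ∀ j, 0 < σ j) (x : Fin k → ℝ)
    (s m : ℝ)
    (hs : s = 1 / τ ^ 2 + ∑ j : Fin k, 1 / (σ j.castSucc) ^ 2)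
    (hm : m = μ / τ ^ 2 + ∑ j : Fin k, x j / (σ j.castSucc) ^ 2)
    (r : ℝ → ℝ)
    (hr : ∀ β, r β = ∫ Δ : ℝ, -Δ * stdNormalCDF ((Δ - β) / σ (Fin.last k)) *
        (Real.sqrt s * stdNormalPDF (Real.sqrt s * (Δ - m / s)))) :
    (-(σ (Fin.last k)) ^ 2 * m
        = -μ * (σ (Fin.last k)) ^ 2 / τ ^ 2 -
            (σ (Fin.last k)) ^ 2 * ∑ j : Fin k, x j / (σ j.castSucc) ^ 2)
      ∧ ∀ β : ℝ, β ≠ -(σ (Fin.last k)) ^ 2 * m → r (-(σ (Fin.last k)) ^ 2 * m) < r β := by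
  set σ0 : ℝ := σ (Fin.last k) with hσ0def
  have hσ0 : 0 < σ0 := hσ _
  have hs' : 0 < s := by
    have h1 : (0:ℝ) < 1 / τ ^ 2 := by positivity
    have h2 : (0:ℝ) ≤ ∑ j : Fin k, 1 / (σ j.castSucc) ^ 2 :=
      Finset.sum_nonneg fun j _ => by positivity
    rw [hs]; linarith
  have hsc : s * (m / s) = m := by field_simp
  have hq : 0 < s + 1 / σ0 ^ 2 := by positivity
  have hrf : r = fun b => ∫ Δ : ℝ, Fint σ0 s (m / s) b Δ := by
    funext b; rw [hr b]; rfl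
  subst hrf
  constructor
  · rw [hm]; ring
  · set βs : ℝ := -σ0 ^ 2 * m with hβs
    have hderiv : ∀ b : ℝ, 0 < (b / σ0 ^ 2 + m) →
        0 < deriv (fun b => ∫ Δ : ℝ, Fint σ0 s (m / s) b Δ) b := by
      intro b hb
      rw [(hasDerivAt_risk hσ0 hs' b).deriv, integral_Fint' hσ0 hs']
      have hK : 0 < Real.sqrt s * Real.exp (-(b ^ 2 / σ0 ^ 2 + s * (m / s) ^ 2 -
            (s + 1 / σ0 ^ 2) * ((b / σ0 ^ 2 + s * (m / s)) / (s + 1 / σ0 ^ 2)) ^ 2) / 2)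
          / (σ0 * Real.sqrt (s + 1 / σ0 ^ 2) * Real.sqrt (2 * Real.pi)) :=
        div_pos (mul_pos (Real.sqrt_pos.2 hs') (Real.exp_pos _))
          (mul_pos (mul_pos hσ0 (Real.sqrt_pos.2 hq)) s2p)
      have h2 : 0 < (b / σ0 ^ 2 + s * (m / s)) / (s + 1 / σ0 ^ 2) := by
        rw [hsc]; exact div_pos hb hq
      exact mul_pos hK h2
    have hderiv' : ∀ b : ℝ, (b / σ0 ^ 2 + m) < 0 →
        deriv (fun b => ∫ Δ : ℝ, Fint σ0 s (m / s) b Δ) b < 0 := by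
      intro b hb
      rw [(hasDerivAt_risk hσ0 hs' b).deriv, integral_Fint' hσ0 hs']
      have hK : 0 < Real.sqrt s * Real.exp (-(b ^ 2 / σ0 ^ 2 + s * (m / s) ^ 2 -
            (s + 1 / σ0 ^ 2) * ((b / σ0 ^ 2 + s * (m / s)) / (s + 1 / σ0 ^ 2)) ^ 2) / 2)
          / (σ0 * Real.sqrt (s + 1 / σ0 ^ 2) * Real.sqrt (2 * Real.pi)) :=
        div_pos (mul_pos (Real.sqrt_pos.2 hs') (Real.exp_pos _))
          (mul_pos (mul_pos hσ0 (Real.sqrt_pos.2 hq)) s2p)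
      have h2 : (b / σ0 ^ 2 + s * (m / s)) / (s + 1 / σ0 ^ 2) < 0 := by
        rw [hsc]; exact div_neg_of_neg_of_pos hb hq
      exact mul_neg_of_pos_of_neg hK h2
    have hcont : Continuous (fun b => ∫ Δ : ℝ, Fint σ0 s (m / s) b Δ) := by
      have : Differentiable ℝ (fun b => ∫ Δ : ℝ, Fint σ0 s (m / s) b Δ) :=
        fun b => (hasDerivAt_risk hσ0 hs' b).differentiableAt
      exact this.continuous
    have hmono : StrictMonoOn (fun b => ∫ Δ : ℝ, Fint σ0 s (m / s) b Δ) (Set.Ici βs) := by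
      refine strictMonoOn_of_deriv_pos (convex_Ici βs) hcont.continuousOn ?_
      intro b hb
      rw [interior_Ici, Set.mem_Ioi] at hb
      refine hderiv b ?_
      rw [hβs] at hb
      have : 0 < b + σ0 ^ 2 * m := by linarith
      have hσ2 : 0 < σ0 ^ 2 := by positivity
      rw [div_add' _ _ _ (ne_of_gt hσ2)]
      exact div_pos (by nlinarith) hσ2
    have hanti : StrictAntiOn (fun b => ∫ Δ : ℝ, Fint σ0 s (m / s) b Δ) (Set.Iic βs) := by
      refine strictAntiOn_of_deriv_neg (convex_Iic βs) hcont.continuousOn ?_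
      intro b hb
      rw [interior_Iic, Set.mem_Iio] at hb
      refine hderiv' b ?_
      rw [hβs] at hb
      have hσ2 : 0 < σ0 ^ 2 := by positivity
      rw [div_add' _ _ _ (ne_of_gt hσ2)]
      exact div_neg_of_neg_of_pos (by nlinarith) hσ2
    intro β hβ
    rcases hβ.lt_or_gt with h | h
    · exact hanti (Set.mem_Iic.2 h.le) (Set.mem_Iic.2 le_rfl) h
    · exact hmono (Set.self_mem_Ici) (Set.mem_Ici.2 h.le) h
end
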